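/- Let 𝓑 be a Hilbert space with orthonormal basis {b_q^n}_{(q,n)∈ℐ}, fix unit vectors d₁,…,d_P ∈ 𝕊², and for μ ∈ ℂ^P define T μ := Σ_{(q,n)∈ℐ} c_q^n β_q⁻¹ b_q^n where c_q^n := (4π i^q/√P)·Σ_{p=1}^P μ_p·conj(Y_q^n(d_p)), with β_q > 0 and Y_q^n spherical harmonics satisfying Σ_{n=-q}^{q} |Y_q^n(d)|² = (2q+1)/(4π) for every d ∈ 𝕊². Fix (ℓ,m) ∈ ℐ and 0 < η ≤ 1. If ‖b_ℓ^m − T μ‖_𝓑 ≤ η, then ‖μ‖_{ℓ²} ≥ (1−η)·β_ℓ/(2√(π(2ℓ+1))). -/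

import Mathlib

/-!
Pairing `b_ℓ^m - Tμ` with the unit vector `b_ℓ^m` gives `|1 - c_ℓ^m / β_ℓ| ≤ η`, so
`|c_ℓ^m| ≥ (1 - η) β_ℓ`. On the other hand `c_ℓ^m` is `4π i^ℓ / √P` times the inner product of
`μ` with the vector `(Y_ℓ^m(d_p))_p`, whose squared norm is at most `P (2ℓ+1)/(4π)` by the addition
theorem; Cauchy–Schwarz then gives `|c_ℓ^m| ≤ 2 √(π(2ℓ+1)) ‖μ‖`.
-/

open scoped ComplexConjugate InnerProductSpace
open Real

section Orthonormal

variable {ι 𝕜 E : Type*} [RCLike 𝕜] [NormedAddCommGroup E] [InnerProductSpace 𝕜 E]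
  {v : ι → E} {c : ι → 𝕜} {x : E}

theorem Orthonormal.inner_eq_of_hasSum (hv : Orthonormal 𝕜 v)
    (hx : HasSum (fun i => c i • v i) x) (j : ι) : ⟪v j, x⟫_𝕜 = c j := by
  have h := (innerSL 𝕜 (v j)).hasSum hx
  simp only [innerSL_apply_apply, inner_smul_right] at h
  refine h.unique ?_
  simpa [inner_self_eq_norm_sq_to_K, hv.norm_eq_one] using
    hasSum_single (f := fun i => c i * ⟪v j, v i⟫_𝕜) j fun i hi => by
      rw [hv.inner_eq_zero hi.symm, mul_zero]

theorem Orthonormal.one_sub_norm_sub_le_norm_of_hasSum (hv : Orthonormal 𝕜 v)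
    (hx : HasSum (fun i => c i • v i) x) (j : ι) : 1 - ‖v j - x‖ ≤ ‖c j‖ := by
  have h : ‖1 - c j‖ ≤ ‖v j - x‖ :=
    calc ‖1 - c j‖ = ‖⟪v j, v j - x⟫_𝕜‖ := by
          rw [inner_sub_right, hv.inner_eq_of_hasSum hx, inner_self_eq_norm_sq_to_K, hv.1 j]
          norm_num
      _ ≤ ‖v j‖ * ‖v j - x‖ := norm_inner_le_norm _ _
      _ = ‖v j - x‖ := by rw [hv.1 j, one_mul]
  have := norm_sub_norm_le (1 : 𝕜) (c j)
  rw [norm_one] at this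
  linarith

end Orthonormal

theorem norm_sum_mul_conj_le {ι 𝕜 : Type*} [Fintype ι] [RCLike 𝕜] (μ : EuclideanSpace 𝕜 ι)
    (y : ι → 𝕜) : ‖∑ i, μ i * conj (y i)‖ ≤ ‖μ‖ * √(∑ i, ‖y i‖ ^ 2) := by
  have h : ∑ i, μ i * conj (y i) = ⟪WithLp.toLp 2 y, μ⟫_𝕜 := by
    simp [PiLp.inner_apply]
  rw [h, mul_comm]
  simpa [EuclideanSpace.norm_eq] using norm_inner_le_norm (WithLp.toLp 2 y) μ

theorem sum_norm_sq_apply_le_card_mul {ι κ E : Type*} [Fintype ι] [Fintype κ]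
    [SeminormedAddCommGroup E]
    (f : ι → κ → E) {C : ℝ} (hf : ∀ i, ∑ k, ‖f i k‖ ^ 2 ≤ C) (k : κ) :
    ∑ i, ‖f i k‖ ^ 2 ≤ Fintype.card ι * C :=
  calc ∑ i, ‖f i k‖ ^ 2 ≤ ∑ _i : ι, C := Finset.sum_le_sum fun i _ =>
        (Finset.single_le_sum (fun k _ => sq_nonneg ‖f i k‖) (Finset.mem_univ k)).trans (hf i)
    _ = Fintype.card ι * C := by simp

theorem mul_sqrt_div_self {c : ℝ} (hc : 0 ≤ c) (a : ℝ) : c * √(a / c) = √(c * a) := by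
  rcases hc.eq_or_lt with rfl | hc
  · simp
  · rw [← sqrt_sq hc.le, ← sqrt_mul (sq_nonneg c), sqrt_sq hc.le]
    congr 1
    field_simp

/-- The paper's `c_q^n`. -/
noncomputable def ppwCoeff {P : ℕ} (d : Fin P → EuclideanSpace ℝ (Fin 3))
    (Yh : (q : ℕ) → Fin (2 * q + 1) → EuclideanSpace ℝ (Fin 3) → ℂ)
    (μ : EuclideanSpace ℂ (Fin P)) (q : ℕ) (n : Fin (2 * q + 1)) : ℂ :=
  4 * (π : ℂ) * Complex.I ^ q / (√P : ℂ) * ∑ p : Fin P, μ p * conj (Yh q n (d p))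

theorem norm_ppwCoeff_le {P : ℕ} (d : Fin P → EuclideanSpace ℝ (Fin 3)) (hd : ∀ p, ‖d p‖ = 1)
    (Yh : (q : ℕ) → Fin (2 * q + 1) → EuclideanSpace ℝ (Fin 3) → ℂ)
    (hadd : ∀ (q : ℕ) (x : EuclideanSpace ℝ (Fin 3)), ‖x‖ = 1 →
      ∑ n : Fin (2 * q + 1), ‖Yh q n x‖ ^ 2 = (2 * (q : ℝ) + 1) / (4 * π))
    (μ : EuclideanSpace ℂ (Fin P)) (q : ℕ) (n : Fin (2 * q + 1)) :
    ‖ppwCoeff d Yh μ q n‖ ≤ 2 * √(π * (2 * q + 1)) * ‖μ‖ := by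
  set a : ℝ := (2 * q + 1) / (4 * π)
  have hsum : ‖∑ p, μ p * conj (Yh q n (d p))‖ ≤ ‖μ‖ * (√P * √a) := by
    refine (norm_sum_mul_conj_le μ _).trans (mul_le_mul_of_nonneg_left ?_ (norm_nonneg μ))
    rw [← sqrt_mul (Nat.cast_nonneg P)]
    refine sqrt_le_sqrt ?_
    simpa using sum_norm_sq_apply_le_card_mul (fun p n => Yh q n (d p))
      (fun p => (hadd q (d p) (hd p)).le) n
  have hprefactor : ‖4 * (π : ℂ) * Complex.I ^ q / (√P : ℂ)‖ = 4 * π * (√P)⁻¹ := by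
    rw [norm_div, norm_mul, norm_pow, Complex.norm_I, one_pow, mul_one, div_eq_mul_inv,
      Complex.norm_real, norm_of_nonneg (sqrt_nonneg _)]
    norm_num [abs_of_pos pi_pos]
  calc ‖ppwCoeff d Yh μ q n‖ = 4 * π * (√P)⁻¹ * ‖∑ p, μ p * conj (Yh q n (d p))‖ := by
        rw [ppwCoeff, norm_mul, hprefactor]
    _ ≤ 4 * π * (√P)⁻¹ * (‖μ‖ * (√P * √a)) := by gcongr
    _ = 4 * π * √a * ‖μ‖ * ((√P)⁻¹ * √P) := by ring
    -- `≤` rather than `=` covers `P = 0`, where `(√P)⁻¹ = 0`.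
    _ ≤ 4 * π * √a * ‖μ‖ := mul_le_of_le_one_right (by positivity) inv_mul_le_one
    _ = 2 * √(π * (2 * q + 1)) * ‖μ‖ := by
        rw [mul_sqrt_div_self (by positivity),
          show 4 * π * (2 * q + 1) = 2 ^ 2 * (π * (2 * q + 1)) by ring, sqrt_mul (by positivity),
          sqrt_sq zero_le_two]

theorem ppw_discrete_instability
    {𝓑 : Type*} [NormedAddCommGroup 𝓑] [InnerProductSpace ℂ 𝓑]
    (b : HilbertBasis ((q : ℕ) × Fin (2 * q + 1)) ℂ 𝓑)
    (β : ℕ → ℝ) (hβ : ∀ q, 0 < β q)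
    (P : ℕ)
    (d : Fin P → EuclideanSpace ℝ (Fin 3)) (hd : ∀ p, ‖d p‖ = 1)
    (Yh : (q : ℕ) → Fin (2 * q + 1) → EuclideanSpace ℝ (Fin 3) → ℂ)
    (hadd : ∀ (q : ℕ) (x : EuclideanSpace ℝ (Fin 3)), ‖x‖ = 1 →
      ∑ n : Fin (2 * q + 1), ‖Yh q n x‖ ^ 2 = (2 * (q : ℝ) + 1) / (4 * Real.pi))
    (μ : EuclideanSpace ℂ (Fin P))
    (i₀ : (q : ℕ) × Fin (2 * q + 1)) (η : ℝ)
    (Tμ : 𝓑)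
    (hTμ : HasSum (fun i : (q : ℕ) × Fin (2 * q + 1) =>
      ((4 * (Real.pi : ℂ) * Complex.I ^ i.1 / (Real.sqrt P : ℂ) *
          ∑ p : Fin P, μ p * (starRingEnd ℂ) (Yh i.1 i.2 (d p))) * (β i.1 : ℂ)⁻¹) • b i) Tμ)
    (herr : ‖b i₀ - Tμ‖ ≤ η) :
    (1 - η) * β i₀.1 / (2 * Real.sqrt (Real.pi * (2 * (i₀.1 : ℝ) + 1))) ≤ ‖μ‖ := by
  obtain ⟨ℓ, m⟩ := i₀
  have hβℓ := hβ ℓ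
  have hcoeff : 1 - η ≤ ‖ppwCoeff d Yh μ ℓ m‖ / β ℓ := by
    have h := b.orthonormal.one_sub_norm_sub_le_norm_of_hasSum hTμ ⟨ℓ, m⟩
    rw [norm_mul, norm_inv, Complex.norm_real, norm_of_nonneg hβℓ.le, ← div_eq_mul_inv] at h
    exact (sub_le_sub_left herr 1).trans h
  rw [le_div_iff₀ hβℓ] at hcoeff
  rw [div_le_iff₀ (by positivity), mul_comm ‖μ‖]
  exact hcoeff.trans (norm_ppwCoeff_le d hd Yh hadd μ ℓ m)
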